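/- The vertices (extreme points) of the Birkhoff polytope of n × n doubly stochastic matrices are exactly the n × n permutation matrices. -/

import Mathlib

/-- The extreme points of the Birkhoff polytope of `n × n` doubly stochastic matrices
are exactly the permutation matrices. -/
theorem extremePoints_birkhoff (n : ℕ) :
    Set.extremePoints ℝ (doublyStochastic ℝ (Fin n) : Set (Matrix (Fin n) (Fin n) ℝ)) =
      {M : Matrix (Fin n) (Fin n) ℝ | ∃ σ : Equiv.Perm (Fin n), M = σ.permMatrix ℝ} := by
  simp only [extremePoints_doublyStochastic, eq_comm]
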